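/- arXiv:math-ph/0606058 — 4 statements merged into one kernel-verified Lean document; each statement's English description precedes it below -/
import Mathlib

section
/- For all ε > 0 and Ω ≥ 0, every GP minimizer Ψ satisfies ‖ |Ψ|² − 1/π ‖_{L²(B₁)} ≤ εΩ/2, and consequently ‖ |Ψ|² − 1/π ‖_{L¹(B₁)} ≤ √π · εΩ/2. In particular, if Ω = Ω(ε) satisfies εΩ(ε) → 0 as ε → 0, the density |Ψ|² converges to the constant 1/π in L¹(B₁). -/
open MeasureTheory Real Filter

noncomputable section

/-- Points of the plane. -/
abbrev Pt : Type := EuclideanSpace ℝ (Fin 2)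

/-- The open unit disc. -/
def B1 : Set Pt := Metric.ball 0 1

/-- First partial derivative of a complex-valued function. -/
def pd1 (Ψ : Pt → ℂ) (x : Pt) : ℂ := fderiv ℝ Ψ x (EuclideanSpace.single 0 1)

/-- Second partial derivative of a complex-valued function. -/
def pd2 (Ψ : Pt → ℂ) (x : Pt) : ℂ := fderiv ℝ Ψ x (EuclideanSpace.single 1 1)

/-- Angular momentum operator `L = -i (x₁ ∂₂ - x₂ ∂₁)`. -/
def angMom (Ψ : Pt → ℂ) (x : Pt) : ℂ :=
  -Complex.I * ((x 0 : ℂ) * pd2 Ψ x - (x 1 : ℂ) * pd1 Ψ x)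

/-- The Gross-Pitaevskii energy density `|∇Ψ|² - Ω conj(Ψ) LΨ + |Ψ|⁴/ε²`. -/
def gpDensity (ε Ω : ℝ) (Ψ : Pt → ℂ) (x : Pt) : ℝ :=
  ‖pd1 Ψ x‖ ^ 2 + ‖pd2 Ψ x‖ ^ 2
    - Ω * (starRingEnd ℂ (Ψ x) * angMom Ψ x).re
    + ‖Ψ x‖ ^ 4 / ε ^ 2

/-- The Gross-Pitaevskii functional on the unit disc. -/
def gpEnergy (ε Ω : ℝ) (Ψ : Pt → ℂ) : ℝ := ∫ x in B1, gpDensity ε Ω Ψ x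

/-- Admissible (H¹, normalized) wave functions. -/
def gpAdm (Ψ : Pt → ℂ) : Prop :=
  DifferentiableOn ℝ Ψ B1 ∧
  IntegrableOn (fun x => ‖Ψ x‖ ^ 2) B1 ∧
  IntegrableOn (fun x => ‖pd1 Ψ x‖ ^ 2 + ‖pd2 Ψ x‖ ^ 2) B1 ∧
  IntegrableOn (fun x => ‖Ψ x‖ ^ 4) B1 ∧
  IntegrableOn (fun x => (starRingEnd ℂ (Ψ x) * angMom Ψ x).re) B1 ∧
  (∫ x in B1, ‖Ψ x‖ ^ 2) = 1

/-- The GP ground-state energy: infimum of the functional over normalized functions. -/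
def gpGround (ε Ω : ℝ) : ℝ := sInf {E | ∃ Ψ : Pt → ℂ, gpAdm Ψ ∧ E = gpEnergy ε Ω Ψ}

/-- A GP minimizer: a normalized admissible function attaining the infimum. -/
def IsGPMinimizer (ε Ω : ℝ) (Ψ : Pt → ℂ) : Prop :=
  gpAdm Ψ ∧ gpEnergy ε Ω Ψ = gpGround ε Ω

/-- The Thomas-Fermi functional. -/
def tfEnergy (Ω₀ : ℝ) (ρ : Pt → ℝ) : ℝ :=
  ∫ x in B1, ((ρ x) ^ 2 - Ω₀ ^ 2 * ‖x‖ ^ 2 * ρ x / 4)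

/-- Admissible TF densities: nonnegative, in L²(B₁), of total mass one. -/
def tfAdm (ρ : Pt → ℝ) : Prop :=
  IntegrableOn ρ B1 ∧ IntegrableOn (fun x => (ρ x) ^ 2) B1 ∧
  (∀ᵐ x ∂(volume.restrict B1), 0 ≤ ρ x) ∧ (∫ x in B1, ρ x) = 1

/-- The TF ground-state energy. -/
def tfGround (Ω₀ : ℝ) : ℝ := sInf {E | ∃ ρ : Pt → ℝ, tfAdm ρ ∧ E = tfEnergy Ω₀ ρ}

/-- Radius of the TF "hole". -/
def R0 (Ω₀ : ℝ) : ℝ := Real.sqrt (1 - 4 / (Real.sqrt π * Ω₀))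

/-- The TF minimizer. -/
def rhoTF (Ω₀ : ℝ) (x : Pt) : ℝ :=
  if Ω₀ ≤ 4 / Real.sqrt π then 1 / π - Ω₀ ^ 2 / 16 * (1 - 2 * ‖x‖ ^ 2)
  else max 0 (Ω₀ ^ 2 / 8 * (‖x‖ ^ 2 - 1) + Ω₀ / (2 * Real.sqrt π))

/-! The constant trial function `π^{-1/2}` has energy `1/(π ε²)`, so a minimizer has
`∫ |Ψ|⁴ / ε² - Ω²/4 ≤ 1/(π ε²)`: the lower bound comes from `|x| ≤ 1` on the disc, which gives
`|LΨ| ≤ |∇Ψ|`, and AM-GM `Ω |Ψ| |LΨ| ≤ |LΨ|² + Ω²|Ψ|²/4`. Since `∫ |Ψ|² = 1`,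
`∫ (|Ψ|² - 1/π)² = ∫ |Ψ|⁴ - 1/π ≤ (εΩ/2)²`, and the `L¹` bound is Cauchy-Schwarz on a set of
measure `π`. -/

theorem sq_integral_le_measureReal_mul_integral_sq {α : Type*} [MeasurableSpace α]
    {μ : Measure α} [IsFiniteMeasure μ] {f : α → ℝ} (hf : Integrable f μ)
    (hf2 : Integrable (fun x => f x ^ 2) μ) :
    (∫ x, f x ∂μ) ^ 2 ≤ μ.real Set.univ * ∫ x, f x ^ 2 ∂μ := by
  rcases eq_zero_or_neZero μ with rfl | _
  · simp
  set M := μ.real Set.univ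
  set I := ∫ x, f x ∂μ
  have hM : 0 < M := measureReal_univ_pos
  have hexpand : ∫ x, (M * f x - I) ^ 2 ∂μ = M * (M * ∫ x, f x ^ 2 ∂μ - I ^ 2) := by
    have hsq : ∀ x, (M * f x - I) ^ 2 = (M ^ 2 * f x ^ 2 - 2 * M * I * f x) + I ^ 2 :=
      fun x => by ring
    have h1 : Integrable (fun x => M ^ 2 * f x ^ 2) μ := hf2.const_mul _
    have h2 : Integrable (fun x => 2 * M * I * f x) μ := hf.const_mul _
    have h12 : Integrable (fun x => M ^ 2 * f x ^ 2 - 2 * M * I * f x) μ := h1.sub h2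
    simp_rw [hsq]
    rw [integral_add h12 (integrable_const _), integral_sub h1 h2, integral_const_mul,
      integral_const_mul, integral_const, smul_eq_mul]
    ring
  have h : 0 ≤ ∫ x, (M * f x - I) ^ 2 ∂μ := integral_nonneg fun x => sq_nonneg _
  rw [hexpand, mul_nonneg_iff_of_pos_left hM] at h
  linarith

theorem integral_abs_le_sqrt_measureReal_mul_sqrt_integral_sq {α : Type*} [MeasurableSpace α]
    {μ : Measure α} [IsFiniteMeasure μ] {f : α → ℝ} (hf : Integrable f μ)
    (hf2 : Integrable (fun x => f x ^ 2) μ) :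
    ∫ x, |f x| ∂μ ≤ √(μ.real Set.univ) * √(∫ x, f x ^ 2 ∂μ) := by
  rw [← Real.sqrt_mul measureReal_nonneg]
  refine (le_abs_self _).trans (Real.abs_le_sqrt ?_)
  simpa only [sq_abs] using sq_integral_le_measureReal_mul_integral_sq hf.abs (by simpa using hf2)

theorem volume_B1 : volume B1 = ENNReal.ofReal π := by
  rw [B1, EuclideanSpace.volume_ball]
  norm_num [Real.sq_sqrt Real.pi_nonneg, Real.Gamma_two]

theorem measureReal_B1 : volume.real B1 = π := by
  rw [measureReal_def, volume_B1, ENNReal.toReal_ofReal Real.pi_nonneg]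

instance : IsFiniteMeasure (volume.restrict B1) :=
  isFiniteMeasure_restrict.mpr (by rw [volume_B1]; exact ENNReal.ofReal_ne_top)

section Density

variable {ρ : Pt → ℝ} (hρ : IntegrableOn ρ B1) (hρ2 : IntegrableOn (fun x => ρ x ^ 2) B1)
include hρ hρ2

theorem integrableOn_sq_sub_const (c : ℝ) : IntegrableOn (fun x => (ρ x - c) ^ 2) B1 := by
  have h : IntegrableOn (fun x => ρ x ^ 2 - 2 * c * ρ x + c ^ 2) B1 :=
    (hρ2.sub (hρ.const_mul _)).add (integrable_const _)
  exact h.congr_fun (fun x _ => by ring) measurableSet_ball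

theorem integral_sq_sub_inv_pi (hmass : ∫ x in B1, ρ x = 1) :
    ∫ x in B1, (ρ x - 1 / π) ^ 2 = (∫ x in B1, ρ x ^ 2) - 1 / π := by
  have h1 : IntegrableOn (fun x => 2 / π * ρ x) B1 := hρ.const_mul _
  have h12 : IntegrableOn (fun x => ρ x ^ 2 - 2 / π * ρ x) B1 := hρ2.sub h1
  have hsq : ∀ x, (ρ x - 1 / π) ^ 2 = (ρ x ^ 2 - 2 / π * ρ x) + 1 / π ^ 2 :=
    fun x => by ring
  simp_rw [hsq]
  rw [integral_add h12 (integrable_const _), integral_sub hρ2 h1, integral_const_mul, hmass,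
    setIntegral_const, measureReal_B1, smul_eq_mul]
  field_simp
  ring

end Density

theorem norm_angMom_sq_le (Ψ : Pt → ℂ) {x : Pt} (hx : ‖x‖ ≤ 1) :
    ‖angMom Ψ x‖ ^ 2 ≤ ‖pd1 Ψ x‖ ^ 2 + ‖pd2 Ψ x‖ ^ 2 := by
  have hx2 : x 0 ^ 2 + x 1 ^ 2 ≤ 1 := by
    have h := EuclideanSpace.norm_sq_eq x
    simp only [Fin.sum_univ_two, Real.norm_eq_abs, sq_abs] at h
    nlinarith [norm_nonneg x]
  have htri : ‖angMom Ψ x‖ ≤ |x 0| * ‖pd2 Ψ x‖ + |x 1| * ‖pd1 Ψ x‖ := by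
    rw [angMom, norm_mul, norm_neg, Complex.norm_I, one_mul]
    refine (norm_sub_le _ _).trans_eq ?_
    simp only [norm_mul, Complex.norm_real, Real.norm_eq_abs]
  calc ‖angMom Ψ x‖ ^ 2 ≤ (|x 0| * ‖pd2 Ψ x‖ + |x 1| * ‖pd1 Ψ x‖) ^ 2 := by gcongr
    _ ≤ (x 0 ^ 2 + x 1 ^ 2) * (‖pd1 Ψ x‖ ^ 2 + ‖pd2 Ψ x‖ ^ 2) := by
      nlinarith [sq_nonneg (|x 0| * ‖pd1 Ψ x‖ - |x 1| * ‖pd2 Ψ x‖), sq_abs (x 0), sq_abs (x 1)]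
    _ ≤ ‖pd1 Ψ x‖ ^ 2 + ‖pd2 Ψ x‖ ^ 2 := mul_le_of_le_one_left (by positivity) hx2

theorem gpDensity_ge (ε Ω : ℝ) (Ψ : Pt → ℂ) {x : Pt} (hx : x ∈ B1) :
    ‖Ψ x‖ ^ 4 / ε ^ 2 - Ω ^ 2 * ‖Ψ x‖ ^ 2 / 4 ≤ gpDensity ε Ω Ψ x := by
  have hL := norm_angMom_sq_le Ψ (mem_ball_zero_iff.mp hx).le
  have hre : Ω * (starRingEnd ℂ (Ψ x) * angMom Ψ x).re ≤ |Ω| * (‖Ψ x‖ * ‖angMom Ψ x‖) :=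
    calc _ ≤ |Ω * (starRingEnd ℂ (Ψ x) * angMom Ψ x).re| := le_abs_self _
      _ ≤ |Ω| * ‖starRingEnd ℂ (Ψ x) * angMom Ψ x‖ := by
        rw [abs_mul]; gcongr; exact Complex.abs_re_le_norm _
      _ = |Ω| * (‖Ψ x‖ * ‖angMom Ψ x‖) := by rw [norm_mul, RCLike.norm_conj]
  have hAM : |Ω| * (‖Ψ x‖ * ‖angMom Ψ x‖) ≤ ‖angMom Ψ x‖ ^ 2 + Ω ^ 2 * ‖Ψ x‖ ^ 2 / 4 := by
    nlinarith [sq_nonneg (‖angMom Ψ x‖ - |Ω| * ‖Ψ x‖ / 2), sq_abs Ω]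
  rw [gpDensity]
  linarith

theorem gpEnergy_ge (ε Ω : ℝ) {Ψ : Pt → ℂ} (hΨ : gpAdm Ψ) :
    (∫ x in B1, ‖Ψ x‖ ^ 4) / ε ^ 2 - Ω ^ 2 / 4 ≤ gpEnergy ε Ω Ψ := by
  obtain ⟨-, h2, hgrad, h4, hrot, hnorm⟩ := hΨ
  have h4' : IntegrableOn (fun x => ‖Ψ x‖ ^ 4 / ε ^ 2) B1 := h4.div_const _
  have h2' : IntegrableOn (fun x => Ω ^ 2 * ‖Ψ x‖ ^ 2 / 4) B1 := (h2.const_mul _).div_const _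
  calc _ = ∫ x in B1, (‖Ψ x‖ ^ 4 / ε ^ 2 - Ω ^ 2 * ‖Ψ x‖ ^ 2 / 4) := by
        rw [integral_sub h4' h2', integral_div, integral_div, integral_const_mul, hnorm, mul_one]
    _ ≤ gpEnergy ε Ω Ψ :=
        setIntegral_mono_on (h4'.sub h2') ((hgrad.sub (hrot.const_mul Ω)).add h4')
          measurableSet_ball fun x hx => gpDensity_ge ε Ω Ψ hx

theorem gpAdm_const {c : ℂ} (hc : π * ‖c‖ ^ 2 = 1) : gpAdm fun _ => c := by
  refine ⟨differentiableOn_const _, integrable_const _, ?_, integrable_const _, ?_, ?_⟩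
  · simp [pd1, pd2]
  · simp [angMom, pd1, pd2]
  rw [setIntegral_const, measureReal_B1, smul_eq_mul, hc]

theorem gpEnergy_const (ε Ω : ℝ) (c : ℂ) :
    gpEnergy ε Ω (fun _ => c) = π * (‖c‖ ^ 4 / ε ^ 2) := by
  simp [gpEnergy, gpDensity, angMom, pd1, pd2, measureReal_B1]

theorem gpGround_le {ε : ℝ} (hε : ε ≠ 0) (Ω : ℝ) : gpGround ε Ω ≤ 1 / (π * ε ^ 2) := by
  set c : ℂ := (((√π)⁻¹ : ℝ) : ℂ)
  have hc : ‖c‖ ^ 2 = π⁻¹ := by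
    rw [Complex.norm_real, Real.norm_eq_abs, sq_abs, inv_pow, Real.sq_sqrt Real.pi_nonneg]
  have hbdd : BddBelow {E | ∃ Ψ, gpAdm Ψ ∧ E = gpEnergy ε Ω Ψ} := by
    refine ⟨-(Ω ^ 2 / 4), ?_⟩
    rintro _ ⟨Ψ, hΨ, rfl⟩
    have : 0 ≤ (∫ x in B1, ‖Ψ x‖ ^ 4) / ε ^ 2 := by positivity
    linarith [gpEnergy_ge ε Ω hΨ]
  calc gpGround ε Ω ≤ gpEnergy ε Ω (fun _ => c) :=
        csInf_le hbdd ⟨_, gpAdm_const (by rw [hc]; field_simp), rfl⟩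
    _ = 1 / (π * ε ^ 2) := by
        rw [gpEnergy_const, show ‖c‖ ^ 4 = (‖c‖ ^ 2) ^ 2 by ring, hc]
        field_simp

namespace IsGPMinimizer

variable {ε Ω : ℝ} {Ψ : Pt → ℂ}

theorem integral_norm_pow_four_le (hε : 0 < ε) (h : IsGPMinimizer ε Ω Ψ) :
    ∫ x in B1, ‖Ψ x‖ ^ 4 ≤ 1 / π + (ε * Ω / 2) ^ 2 := by
  have hE := (gpEnergy_ge ε Ω h.1).trans (h.2.trans_le (gpGround_le hε.ne' Ω))
  have hε2 : 0 < ε ^ 2 := by positivity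
  have key : (∫ x in B1, ‖Ψ x‖ ^ 4) / ε ^ 2 ≤ (1 / π + (ε * Ω / 2) ^ 2) / ε ^ 2 := by
    calc _ ≤ 1 / (π * ε ^ 2) + Ω ^ 2 / 4 := by linarith
      _ = _ := by field_simp; ring
  exact (div_le_div_iff_of_pos_right hε2).mp key

theorem integral_sq_sub_le (hε : 0 < ε) (h : IsGPMinimizer ε Ω Ψ) :
    ∫ x in B1, (‖Ψ x‖ ^ 2 - 1 / π) ^ 2 ≤ (ε * Ω / 2) ^ 2 := by
  have h4b := h.integral_norm_pow_four_le hε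
  obtain ⟨⟨-, h2, -, h4, -, hnorm⟩, -⟩ := h
  have h4' : IntegrableOn (fun x => (‖Ψ x‖ ^ 2) ^ 2) B1 := by simpa [← pow_mul] using h4
  rw [integral_sq_sub_inv_pi h2 h4' hnorm]
  simpa [← pow_mul] using sub_le_iff_le_add'.mpr h4b

theorem sqrt_integral_sq_sub_le (hε : 0 < ε) (hΩ : 0 ≤ Ω) (h : IsGPMinimizer ε Ω Ψ) :
    √(∫ x in B1, (‖Ψ x‖ ^ 2 - 1 / π) ^ 2) ≤ ε * Ω / 2 :=
  (Real.sqrt_le_left (by positivity)).mpr (h.integral_sq_sub_le hε)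

theorem integral_abs_sub_le (hε : 0 < ε) (hΩ : 0 ≤ Ω) (h : IsGPMinimizer ε Ω Ψ) :
    ∫ x in B1, |‖Ψ x‖ ^ 2 - 1 / π| ≤ √π * (ε * Ω / 2) := by
  have h2 : IntegrableOn (fun x => ‖Ψ x‖ ^ 2) B1 := h.1.2.1
  have h4 : IntegrableOn (fun x => (‖Ψ x‖ ^ 2) ^ 2) B1 := by simpa [← pow_mul] using h.1.2.2.2.1
  have hdev : IntegrableOn (fun x => ‖Ψ x‖ ^ 2 - 1 / π) B1 := h2.sub (integrable_const _)
  calc _ ≤ √((volume.restrict B1).real Set.univ) * √(∫ x in B1, (‖Ψ x‖ ^ 2 - 1 / π) ^ 2) :=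
        integral_abs_le_sqrt_measureReal_mul_sqrt_integral_sq hdev
          (integrableOn_sq_sub_const h2 h4 _)
    _ ≤ √π * (ε * Ω / 2) := by
        rw [measureReal_restrict_apply_univ, measureReal_B1]
        gcongr
        exact h.sqrt_integral_sq_sub_le hε hΩ

end IsGPMinimizer

theorem stmt1 :
    (∀ ε : ℝ, 0 < ε → ∀ Ω : ℝ, 0 ≤ Ω → ∀ Ψ : Pt → ℂ, IsGPMinimizer ε Ω Ψ →
      Real.sqrt (∫ x in B1, (‖Ψ x‖ ^ 2 - 1 / π) ^ 2) ≤ ε * Ω / 2 ∧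
      (∫ x in B1, |‖Ψ x‖ ^ 2 - 1 / π|) ≤ Real.sqrt π * (ε * Ω / 2)) ∧
    (∀ (Ω : ℝ → ℝ) (Ψ : ℝ → Pt → ℂ),
      (∀ ε : ℝ, 0 < ε → 0 ≤ Ω ε) →
      Tendsto (fun ε => ε * Ω ε) (nhdsWithin 0 (Set.Ioi 0)) (nhds 0) →
      (∀ ε : ℝ, 0 < ε → IsGPMinimizer ε (Ω ε) (Ψ ε)) →
      Tendsto (fun ε => ∫ x in B1, |‖Ψ ε x‖ ^ 2 - 1 / π|)
        (nhdsWithin 0 (Set.Ioi 0)) (nhds 0)) := by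
  refine ⟨fun ε hε Ω hΩ Ψ h =>
    ⟨h.sqrt_integral_sq_sub_le hε hΩ, h.integral_abs_sub_le hε hΩ⟩, fun Ω Ψ hΩ hεΩ hmin => ?_⟩
  have hbound : Tendsto (fun ε => √π * (ε * Ω ε / 2)) (nhdsWithin 0 (Set.Ioi 0)) (nhds 0) := by
    simpa using (hεΩ.div_const 2).const_mul √π
  refine tendsto_of_tendsto_of_tendsto_of_le_of_le' tendsto_const_nhds hbound
    (Eventually.of_forall fun ε => integral_nonneg fun _ => abs_nonneg _) ?_
  filter_upwards [self_mem_nhdsWithin] with ε hε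
  exact (hmin ε hε).integral_abs_sub_le hε (hΩ ε hε)
end
end

section
/- Let ε > 0, Ω ≥ 0, and n ≥ 1 an integer. Suppose ξ_n : (0,1] → ℝ is positive, non-decreasing, satisfies the Neumann condition ξ_n′(1) = 0, and (as the radial part of Ψ_n(r,θ) = ξ_n(r)e^{inθ} normalized in L²(B₁)) solves the variational equation −Δξ_n + n²ξ_n/r² − Ω n ξ_n + 2ξ_n³/ε² = μ_n ξ_n on B₁ for some real chemical potential μ_n. Then the sup-norm bound ‖Ψ_n‖²_{L^∞(B₁)} = ξ_n(1)² ≤ (ε²/2)(μ_n + Ω n − n²) holds. -/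
open MeasureTheory Real Filter

noncomputable section

private lemma aux_right {f : ℝ → ℝ} {d a : ℝ} (hf : HasDerivAt f d a)
    (h : ∀ᶠ y in nhdsWithin a (Set.Ioi a), f a ≤ f y) : 0 ≤ d := by
  have ht : Filter.Tendsto (slope f a) (nhdsWithin a (Set.Ioi a)) (nhds d) := by
    have := (hf.hasDerivWithinAt (s := Set.Ioi a))
    rw [hasDerivWithinAt_iff_tendsto_slope] at this
    refine this.mono_left (nhdsWithin_mono _ ?_)
    intro x hx
    exact ⟨hx, ne_of_gt hx⟩
  refine ge_of_tendsto ht ?_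
  filter_upwards [h, self_mem_nhdsWithin] with y hy hy'
  have : 0 < y - a := sub_pos.mpr hy'
  have : 0 ≤ (f y - f a) / (y - a) := div_nonneg (by linarith) (by linarith)
  simpa [slope_def_field, div_eq_div_iff] using this

private lemma aux_left {f : ℝ → ℝ} {d a : ℝ} (hf : HasDerivAt f d a)
    (h : ∀ᶠ y in nhdsWithin a (Set.Iio a), f a ≤ f y) : d ≤ 0 := by
  have ht : Filter.Tendsto (slope f a) (nhdsWithin a (Set.Iio a)) (nhds d) := by
    have := (hf.hasDerivWithinAt (s := Set.Iio a))
    rw [hasDerivWithinAt_iff_tendsto_slope] at this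
    refine this.mono_left (nhdsWithin_mono _ ?_)
    intro x hx
    exact ⟨hx, ne_of_lt hx⟩
  refine le_of_tendsto ht ?_
  filter_upwards [h, self_mem_nhdsWithin] with y hy hy'
  have h1 : y - a < 0 := sub_neg.mpr hy'
  have : (f y - f a) / (y - a) ≤ 0 := div_nonpos_of_nonneg_of_nonpos (by linarith) (by linarith)
  simpa [slope_def_field] using this

theorem stmt2 (ε Ω : ℝ) (n : ℕ) (hε : 0 < ε) (hΩ : 0 ≤ Ω) (hn : 1 ≤ n)
    (ξ : ℝ → ℝ) (μ : ℝ)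
    (hpos : ∀ r ∈ Set.Ioc (0:ℝ) 1, 0 < ξ r)
    (hmono : MonotoneOn ξ (Set.Ioc (0:ℝ) 1))
    (hdiff : ∀ r ∈ Set.Ioc (0:ℝ) 1, DifferentiableAt ℝ ξ r ∧ DifferentiableAt ℝ (deriv ξ) r)
    (hneum : deriv ξ 1 = 0)
    (hnorm : (2 * π * ∫ r in (0:ℝ)..1, r * (ξ r) ^ 2) = 1)
    (heq : ∀ r ∈ Set.Ioc (0:ℝ) 1,
      -(deriv (deriv ξ) r + deriv ξ r / r) + (n : ℝ) ^ 2 * ξ r / r ^ 2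
        - Ω * (n : ℝ) * ξ r + 2 * (ξ r) ^ 3 / ε ^ 2 = μ * ξ r) :
    ∀ r ∈ Set.Ioc (0:ℝ) 1, (ξ r) ^ 2 ≤ ε ^ 2 / 2 * (μ + Ω * (n : ℝ) - (n : ℝ) ^ 2) := by
  have hmem1 : (1:ℝ) ∈ Set.Ioc (0:ℝ) 1 := ⟨one_pos, le_refl 1⟩
  have hξ1 : 0 < ξ 1 := hpos 1 hmem1
  -- deriv ξ nonneg on (0,1)
  have hderiv_nonneg : ∀ y ∈ Set.Ioo (0:ℝ) 1, 0 ≤ deriv ξ y := by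
    intro y hy
    refine aux_right ((hdiff y ⟨hy.1, hy.2.le⟩).1.hasDerivAt) ?_
    filter_upwards [Ioo_mem_nhdsGT_of_mem (Set.mem_Ico.mpr ⟨le_refl y, hy.2⟩)] with z hz
    exact hmono ⟨hy.1, hy.2.le⟩ ⟨lt_trans hy.1 hz.1, hz.2.le⟩ hz.1.le
  -- second derivative at 1 nonpositive
  have hdd : deriv (deriv ξ) 1 ≤ 0 := by
    refine aux_left ((hdiff 1 hmem1).2.hasDerivAt) ?_
    filter_upwards [Ioo_mem_nhdsLT_of_mem (Set.mem_Ioc.mpr ⟨one_pos, le_refl 1⟩)] with z hz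
    rw [hneum]
    exact hderiv_nonneg z hz
  have he1 := heq 1 hmem1
  rw [hneum] at he1
  have hε2 : 0 < ε ^ 2 := pow_pos hε 2
  have key : (ξ 1) ^ 2 ≤ ε ^ 2 / 2 * (μ + Ω * (n : ℝ) - (n : ℝ) ^ 2) := by
    have h2 : 2 * (ξ 1) ^ 3 / ε ^ 2 ≤ (μ + Ω * (n : ℝ) - (n : ℝ) ^ 2) * ξ 1 := by
      nlinarith [he1]
    rw [div_le_iff₀ hε2] at h2
    nlinarith [h2, hξ1, hε2]
  intro r hr
  have h3 : ξ r ≤ ξ 1 := hmono hr hmem1 hr.2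
  have h4 : 0 < ξ r := hpos r hr
  nlinarith [key, h3, h4]
end
end

section
/- Let Ω₀ > 4/√π. Then the function ρ^TF(x) = max(0, (Ω₀²/8)(|x|² − 1) + Ω₀/(2√π)) is nonnegative with ∫_{B₁}ρ^TF = 1, vanishes exactly on the 'hole' {|x| ≤ R₀} where R₀ = √(1 − 4/(√π Ω₀)), the Thomas–Fermi functional satisfies E^TF[ρ] ≥ E^TF[ρ^TF] for every ρ ∈ L²(B₁) with ρ ≥ 0 a.e. and ∫_{B₁}ρ = 1, with equality if and only if ρ = ρ^TF a.e., and the minimum value is E^TF = (Ω₀/4)(8/(3√π) − Ω₀). -/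
open MeasureTheory Real Filter

noncomputable section

/-- The TF minimizer in the regime `Ω₀ > 4/√π`. -/
def rho7 (Ω₀ : ℝ) (x : Pt) : ℝ :=
  max 0 (Ω₀ ^ 2 / 8 * (‖x‖ ^ 2 - 1) + Ω₀ / (2 * Real.sqrt π))

/-!
With `μ = Ω₀²/4 - Ω₀/√π` (`tfChemPot`) and `w x = Ω₀²|x|²/4 - μ`, every density of mass one has
`E^TF[ρ] + μ = ∫_{B₁} (ρ² - w ρ)`. For each `x` the map `t ↦ t² - w x * t` on `t ≥ 0` has the
unique minimiser `max 0 (w x / 2)`, which is exactly `ρ^TF x`; integrating gives minimality, and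
equality of the integrals forces equality a.e. For `Ω₀ > 4/√π`, `ρ^TF` is the truncated parabola
`(Ω₀²/8) (|x|² - R₀²)₊`, whose mass and energy are computed in polar coordinates.
-/

theorem integral_ball_fun_norm {s : ℝ} (hs : 0 ≤ s) (f : ℝ → ℝ) :
    ∫ x in Metric.ball (0 : Pt) s, f ‖x‖ = 2 * π * ∫ r in (0 : ℝ)..s, r * f r := by
  have hind : ∀ x : Pt, (Metric.ball (0 : Pt) s).indicator (fun x => f ‖x‖) x
      = (Set.Iio s).indicator f ‖x‖ := fun x => by
    by_cases hx : ‖x‖ < s <;> simp [Set.indicator, hx]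
  have hpow : ∀ r : ℝ, r ^ (2 - 1) • (Set.Iio s).indicator f r
      = (Set.Iio s).indicator (fun r => r * f r) r := fun r => by
    by_cases hr : r < s <;> simp [Set.indicator, hr]
  rw [← integral_indicator measurableSet_ball, funext hind, integral_fun_norm_addHaar,
    finrank_euclideanSpace_fin, measureReal_def, EuclideanSpace.volume_ball_fin_two]
  simp only [hpow]
  rw [setIntegral_indicator measurableSet_Iio, Set.Ioi_inter_Iio,
    intervalIntegral.integral_of_le hs, integral_Ioc_eq_integral_Ioo]
  simp only [ENNReal.ofReal_one, one_pow, one_mul, ENNReal.toReal_ofReal pi_pos.le, smul_eq_mul,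
    nsmul_eq_mul, Nat.cast_ofNat]
  ring

theorem integral_ball_fun_norm_of_eqOn_zero {f : ℝ → ℝ} {R s : ℝ} (hR : 0 ≤ R) (hRs : R ≤ s)
    (hf : Continuous f) (hzero : Set.EqOn f 0 (Set.Icc 0 R)) :
    ∫ x in Metric.ball (0 : Pt) s, f ‖x‖ = 2 * π * ∫ r in R..s, r * f r := by
  have hint : ∀ a b : ℝ, IntervalIntegrable (fun r => r * f r) volume a b :=
    fun a b => (continuous_id.mul hf).intervalIntegrable a b
  have hinner : ∫ r in (0 : ℝ)..R, r * f r = 0 := by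
    rw [intervalIntegral.integral_congr (g := fun _ => 0), intervalIntegral.integral_zero]
    intro r hr
    simp [hzero (Set.uIcc_of_le hR ▸ hr)]
  rw [integral_ball_fun_norm (hR.trans hRs),
    ← intervalIntegral.integral_add_adjacent_intervals (hint 0 R) (hint R s), hinner, zero_add]

section TruncatedParabola

variable {a R r : ℝ}

theorem posPart_parabola_eq_zero (ha : 0 ≤ a) (hr : r ∈ Set.Icc 0 R) :
    max 0 (a * (r ^ 2 - R ^ 2)) = 0 := by
  have : r ^ 2 ≤ R ^ 2 := pow_le_pow_left₀ hr.1 hr.2 2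
  exact max_eq_left (mul_nonpos_of_nonneg_of_nonpos ha (by linarith))

theorem posPart_parabola_eq (ha : 0 ≤ a) (hR : 0 ≤ R) (hr : R ≤ r) :
    max 0 (a * (r ^ 2 - R ^ 2)) = a * (r ^ 2 - R ^ 2) := by
  have : R ^ 2 ≤ r ^ 2 := pow_le_pow_left₀ hR hr 2
  exact max_eq_right (mul_nonneg ha (by linarith))

theorem posPart_parabola_eq_zero_iff (ha : 0 < a) (hR : 0 ≤ R) (hr : 0 ≤ r) :
    max 0 (a * (r ^ 2 - R ^ 2)) = 0 ↔ r ≤ R := by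
  rw [max_eq_left_iff, ← sq_le_sq₀ hr hR, ← sub_nonpos (a := r ^ 2)]
  exact ⟨fun h => nonpos_of_mul_nonpos_right h ha, mul_nonpos_of_nonneg_of_nonpos ha.le⟩

theorem integral_ball_posPart_parabola {s : ℝ} (ha : 0 ≤ a) (hR : 0 ≤ R) (hRs : R ≤ s) :
    ∫ x in Metric.ball (0 : Pt) s, max 0 (a * (‖x‖ ^ 2 - R ^ 2))
      = π * a * (s ^ 2 - R ^ 2) ^ 2 / 2 := by
  rw [integral_ball_fun_norm_of_eqOn_zero (f := fun r => max 0 (a * (r ^ 2 - R ^ 2))) hR hRs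
    (by fun_prop) (fun r hr => posPart_parabola_eq_zero ha hr)]
  have hpoly : ∫ r in R..s, r * max 0 (a * (r ^ 2 - R ^ 2))
      = ∫ r in R..s, a * (r ^ 3 - R ^ 2 * r) := by
    refine intervalIntegral.integral_congr fun r hr => ?_
    rw [Set.uIcc_of_le hRs] at hr
    simp only [posPart_parabola_eq ha hR hr.1]
    ring
  rw [hpoly, intervalIntegral.integral_const_mul,
    intervalIntegral.integral_sub (by simp) ((continuous_const_mul _).intervalIntegrable _ _),
    intervalIntegral.integral_const_mul, integral_pow, integral_id]
  ring

theorem tfEnergy_posPart_parabola (Ω₀ : ℝ) (hR : 0 ≤ R) (hR1 : R ≤ 1) :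
    tfEnergy Ω₀ (fun x => max 0 (Ω₀ ^ 2 / 8 * (‖x‖ ^ 2 - R ^ 2)))
      = -π * Ω₀ ^ 4 / 64 * (1 - R ^ 2) ^ 2 * (1 + 2 * R ^ 2) / 3 := by
  have ha : 0 ≤ Ω₀ ^ 2 / 8 := by positivity
  set f : ℝ → ℝ := fun r => max 0 (Ω₀ ^ 2 / 8 * (r ^ 2 - R ^ 2)) with hf
  show ∫ x in Metric.ball (0 : Pt) 1, (f ‖x‖ ^ 2 - Ω₀ ^ 2 * ‖x‖ ^ 2 * f ‖x‖ / 4) = _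
  rw [integral_ball_fun_norm_of_eqOn_zero (f := fun r => f r ^ 2 - Ω₀ ^ 2 * r ^ 2 * f r / 4)
    hR hR1 (by fun_prop) (fun r hr => by simp [hf, posPart_parabola_eq_zero ha hr])]
  have hpoly : ∫ r in R..1, r * (f r ^ 2 - Ω₀ ^ 2 * r ^ 2 * f r / 4)
      = ∫ r in R..1, -(Ω₀ ^ 2 / 8) ^ 2 * (r ^ 5 - R ^ 4 * r) := by
    refine intervalIntegral.integral_congr fun r hr => ?_
    rw [Set.uIcc_of_le hR1] at hr
    simp only [hf, posPart_parabola_eq ha hR hr.1]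
    ring
  rw [hpoly, intervalIntegral.integral_const_mul,
    intervalIntegral.integral_sub (by simp) ((continuous_const_mul _).intervalIntegrable _ _),
    intervalIntegral.integral_const_mul, integral_pow, integral_id]
  ring

end TruncatedParabola

section PointwiseMinimizer

variable {t w : ℝ}

theorem sq_sub_mul_posPart_half_le (ht : 0 ≤ t) :
    max 0 (w / 2) ^ 2 - w * max 0 (w / 2) ≤ t ^ 2 - w * t := by
  rcases le_total w 0 with hw | hw
  · rw [max_eq_left (by linarith)]
    nlinarith
  · rw [max_eq_right (by linarith)]
    nlinarith [sq_nonneg (t - w / 2)]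

theorem eq_posPart_half_of_sq_sub_mul_eq (ht : 0 ≤ t)
    (heq : t ^ 2 - w * t = max 0 (w / 2) ^ 2 - w * max 0 (w / 2)) : t = max 0 (w / 2) := by
  rcases le_total w 0 with hw | hw
  · rw [max_eq_left (by linarith)] at heq ⊢
    nlinarith
  · rw [max_eq_right (by linarith)] at heq ⊢
    nlinarith [sq_nonneg (t - w / 2)]

end PointwiseMinimizer

section IntegralMinimizer

variable {α : Type*} [MeasurableSpace α] {μ : Measure α} {w ρ : α → ℝ}

theorem integral_sq_sub_mul_posPart_half_le (hρ0 : 0 ≤ᵐ[μ] ρ)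
    (hρ : Integrable (fun x => ρ x ^ 2 - w x * ρ x) μ)
    (hm : Integrable (fun x => max 0 (w x / 2) ^ 2 - w x * max 0 (w x / 2)) μ) :
    ∫ x, (max 0 (w x / 2) ^ 2 - w x * max 0 (w x / 2)) ∂μ ≤ ∫ x, (ρ x ^ 2 - w x * ρ x) ∂μ :=
  integral_mono_ae hm hρ (hρ0.mono fun _ => sq_sub_mul_posPart_half_le)

theorem ae_eq_posPart_half_of_integral_sq_sub_mul_eq (hρ0 : 0 ≤ᵐ[μ] ρ)
    (hρ : Integrable (fun x => ρ x ^ 2 - w x * ρ x) μ)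
    (hm : Integrable (fun x => max 0 (w x / 2) ^ 2 - w x * max 0 (w x / 2)) μ)
    (heq : ∫ x, (ρ x ^ 2 - w x * ρ x) ∂μ
      = ∫ x, (max 0 (w x / 2) ^ 2 - w x * max 0 (w x / 2)) ∂μ) :
    ρ =ᵐ[μ] fun x => max 0 (w x / 2) := by
  have hgap : (fun x => (ρ x ^ 2 - w x * ρ x) - (max 0 (w x / 2) ^ 2 - w x * max 0 (w x / 2)))
      =ᵐ[μ] 0 := by
    refine (integral_eq_zero_iff_of_nonneg_ae ?_ (hρ.sub hm)).mp ?_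
    · exact hρ0.mono fun _ hx => sub_nonneg.mpr (sq_sub_mul_posPart_half_le hx)
    · rw [integral_sub' hρ hm, heq, sub_self]
  filter_upwards [hgap, hρ0] with x hx hx0
  exact eq_posPart_half_of_sq_sub_mul_eq hx0 (sub_eq_zero.mp hx)

end IntegralMinimizer

theorem integrableOn_ball_norm_sq_mul {E : Type*} [NormedAddCommGroup E] [MeasurableSpace E]
    [OpensMeasurableSpace E] {μ : Measure E} {s : ℝ} {ρ : E → ℝ}
    (hρ : IntegrableOn ρ (Metric.ball 0 s) μ) :
    IntegrableOn (fun x => ‖x‖ ^ 2 * ρ x) (Metric.ball 0 s) μ := by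
  refine hρ.bdd_mul (c := s ^ 2) (continuous_norm.pow 2).aestronglyMeasurable ?_
  refine (ae_restrict_iff' measurableSet_ball).mpr (ae_of_all _ fun x hx => ?_)
  rw [mem_ball_zero_iff] at hx
  rw [norm_pow, norm_norm]
  exact pow_le_pow_left₀ (norm_nonneg x) hx.le 2

/-- The Lagrange multiplier of the mass constraint. -/
def tfChemPot (Ω₀ : ℝ) : ℝ := Ω₀ ^ 2 / 4 - Ω₀ / √π

section ThomasFermi

variable {Ω₀ : ℝ} {ρ : Pt → ℝ}

theorem tfAdm.integrableOn_tfIntegrand (hρ : tfAdm ρ) :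
    IntegrableOn (fun x => ρ x ^ 2 - Ω₀ ^ 2 / 4 * (‖x‖ ^ 2 * ρ x)) B1 :=
  hρ.2.1.sub ((integrableOn_ball_norm_sq_mul hρ.1).const_mul _)

theorem tfAdm.integrableOn_sq_sub_mul (hρ : tfAdm ρ) (c : ℝ) :
    IntegrableOn (fun x => ρ x ^ 2 - (Ω₀ ^ 2 * ‖x‖ ^ 2 / 4 - c) * ρ x) B1 :=
  ((hρ.integrableOn_tfIntegrand (Ω₀ := Ω₀)).add (hρ.1.const_mul c)).congr_fun
    (fun x _ => by simp only [Pi.add_apply]; ring) measurableSet_ball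

theorem tfAdm.tfEnergy_add_eq (hρ : tfAdm ρ) (c : ℝ) :
    tfEnergy Ω₀ ρ + c = ∫ x in B1, (ρ x ^ 2 - (Ω₀ ^ 2 * ‖x‖ ^ 2 / 4 - c) * ρ x) := by
  have htf : tfEnergy Ω₀ ρ = ∫ x in B1, (ρ x ^ 2 - Ω₀ ^ 2 / 4 * (‖x‖ ^ 2 * ρ x)) :=
    setIntegral_congr_fun measurableSet_ball fun x _ => by ring
  have hsplit : ∫ x in B1, (ρ x ^ 2 - (Ω₀ ^ 2 * ‖x‖ ^ 2 / 4 - c) * ρ x)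
      = ∫ x in B1, ((ρ x ^ 2 - Ω₀ ^ 2 / 4 * (‖x‖ ^ 2 * ρ x)) + c * ρ x) :=
    setIntegral_congr_fun measurableSet_ball fun x _ => by ring
  rw [hsplit, integral_add hρ.integrableOn_tfIntegrand (hρ.1.const_mul c),
    integral_const_mul, hρ.2.2.2, mul_one, htf]

theorem rho7_eq_posPart_half (x : Pt) :
    rho7 Ω₀ x = max 0 ((Ω₀ ^ 2 * ‖x‖ ^ 2 / 4 - tfChemPot Ω₀) / 2) := by
  have : √π ≠ 0 := (sqrt_pos.mpr pi_pos).ne'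
  rw [rho7, tfChemPot]
  congr 1
  field_simp
  ring

theorem tfEnergy_congr_ae {ρ' : Pt → ℝ} (hρρ' : ρ =ᵐ[volume.restrict B1] ρ') :
    tfEnergy Ω₀ ρ = tfEnergy Ω₀ ρ' :=
  integral_congr_ae (hρρ'.mono fun x hx => by simp only [hx])

theorem continuous_rho7 (Ω₀ : ℝ) : Continuous (rho7 Ω₀) := by
  unfold rho7
  fun_prop

theorem R0_nonneg (Ω₀ : ℝ) : 0 ≤ R0 Ω₀ := sqrt_nonneg _

theorem R0_le_one (hΩ₀ : 0 ≤ Ω₀) : R0 Ω₀ ≤ 1 :=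
  sqrt_le_one.mpr (sub_le_self _ (by positivity))

variable (h : 4 / √π < Ω₀)
include h

theorem pos_of_four_div_sqrt_pi_lt : 0 < Ω₀ := (by positivity : (0 : ℝ) < 4 / √π).trans h

theorem one_sub_R0_sq : 1 - R0 Ω₀ ^ 2 = 4 / (√π * Ω₀) := by
  have hsq : 0 < √π := sqrt_pos.mpr pi_pos
  have hΩ₀ := pos_of_four_div_sqrt_pi_lt h
  have hlt : 4 / (√π * Ω₀) < 1 := by
    rw [div_lt_iff₀ hsq] at h
    rw [div_lt_one (by positivity)]
    linarith
  rw [R0, sq_sqrt (by linarith)]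
  ring

theorem rho7_eq_posPart_parabola :
    rho7 Ω₀ = fun x => max 0 (Ω₀ ^ 2 / 8 * (‖x‖ ^ 2 - R0 Ω₀ ^ 2)) := by
  have hΩ₀ := (pos_of_four_div_sqrt_pi_lt h).ne'
  have : √π ≠ 0 := (sqrt_pos.mpr pi_pos).ne'
  have hR0 : R0 Ω₀ ^ 2 = 1 - 4 / (√π * Ω₀) := by linarith [one_sub_R0_sq h]
  funext x
  rw [rho7, hR0]
  congr 1
  field_simp
  ring

theorem rho7_eq_zero_iff (x : Pt) : rho7 Ω₀ x = 0 ↔ ‖x‖ ≤ R0 Ω₀ := by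
  have hΩ₀ := pos_of_four_div_sqrt_pi_lt h
  rw [rho7_eq_posPart_parabola h]
  exact posPart_parabola_eq_zero_iff (by positivity) (R0_nonneg Ω₀) (norm_nonneg x)

theorem integral_rho7 : ∫ x in B1, rho7 Ω₀ x = 1 := by
  have hΩ₀ := pos_of_four_div_sqrt_pi_lt h
  simp only [rho7_eq_posPart_parabola h, B1]
  rw [integral_ball_posPart_parabola (by positivity) (R0_nonneg Ω₀) (R0_le_one hΩ₀.le), one_pow,
    one_sub_R0_sq h]
  field_simp
  rw [sq_sqrt pi_pos.le]
  ring

theorem tfAdm_rho7 : tfAdm (rho7 Ω₀) := by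
  have hcompact := isCompact_closedBall (0 : Pt) 1
  refine ⟨?_, ?_, ae_of_all _ fun x => le_max_left _ _, integral_rho7 h⟩
  · exact ((continuous_rho7 Ω₀).continuousOn.integrableOn_compact hcompact).mono_set
      Metric.ball_subset_closedBall
  · exact (((continuous_rho7 Ω₀).pow 2).continuousOn.integrableOn_compact hcompact).mono_set
      Metric.ball_subset_closedBall

theorem tfEnergy_rho7 : tfEnergy Ω₀ (rho7 Ω₀) = Ω₀ / 4 * (8 / (3 * √π) - Ω₀) := by
  have hΩ₀ := pos_of_four_div_sqrt_pi_lt h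
  have hR0 : R0 Ω₀ ^ 2 = 1 - 4 / (√π * Ω₀) := by linarith [one_sub_R0_sq h]
  rw [rho7_eq_posPart_parabola h, tfEnergy_posPart_parabola Ω₀ (R0_nonneg Ω₀)
    (R0_le_one hΩ₀.le), one_sub_R0_sq h, hR0]
  field_simp
  rw [sq_sqrt pi_pos.le]
  ring

theorem tfEnergy_rho7_le (hρ : tfAdm ρ) : tfEnergy Ω₀ (rho7 Ω₀) ≤ tfEnergy Ω₀ ρ := by
  have hm := (tfAdm_rho7 h).integrableOn_sq_sub_mul (Ω₀ := Ω₀) (tfChemPot Ω₀)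
  have hmin := (tfAdm_rho7 h).tfEnergy_add_eq (Ω₀ := Ω₀) (tfChemPot Ω₀)
  simp only [rho7_eq_posPart_half] at hm hmin
  have := integral_sq_sub_mul_posPart_half_le (w := fun x => Ω₀ ^ 2 * ‖x‖ ^ 2 / 4 - tfChemPot Ω₀)
    hρ.2.2.1 (hρ.integrableOn_sq_sub_mul _) hm
  linarith [hρ.tfEnergy_add_eq (Ω₀ := Ω₀) (tfChemPot Ω₀)]

theorem ae_eq_rho7_of_tfEnergy_eq (hρ : tfAdm ρ)
    (heq : tfEnergy Ω₀ ρ = tfEnergy Ω₀ (rho7 Ω₀)) : ρ =ᵐ[volume.restrict B1] rho7 Ω₀ := by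
  have hm := (tfAdm_rho7 h).integrableOn_sq_sub_mul (Ω₀ := Ω₀) (tfChemPot Ω₀)
  have hmin := (tfAdm_rho7 h).tfEnergy_add_eq (Ω₀ := Ω₀) (tfChemPot Ω₀)
  simp only [rho7_eq_posPart_half] at hm hmin
  rw [funext (rho7_eq_posPart_half (Ω₀ := Ω₀))]
  exact ae_eq_posPart_half_of_integral_sq_sub_mul_eq
    (w := fun x => Ω₀ ^ 2 * ‖x‖ ^ 2 / 4 - tfChemPot Ω₀) hρ.2.2.1
    (hρ.integrableOn_sq_sub_mul _) hm (by linarith [hρ.tfEnergy_add_eq (Ω₀ := Ω₀) (tfChemPot Ω₀)])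

end ThomasFermi

theorem stmt7 (Ω₀ : ℝ) (h : 4 / Real.sqrt π < Ω₀) :
    (∀ x : Pt, 0 ≤ rho7 Ω₀ x) ∧
    (∫ x in B1, rho7 Ω₀ x) = 1 ∧
    (∀ x ∈ B1, (rho7 Ω₀ x = 0 ↔ ‖x‖ ≤ R0 Ω₀)) ∧
    (∀ ρ : Pt → ℝ, tfAdm ρ →
      tfEnergy Ω₀ (rho7 Ω₀) ≤ tfEnergy Ω₀ ρ ∧
      (tfEnergy Ω₀ ρ = tfEnergy Ω₀ (rho7 Ω₀) ↔ ρ =ᵐ[volume.restrict B1] rho7 Ω₀)) ∧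
    tfEnergy Ω₀ (rho7 Ω₀) = Ω₀ / 4 * (8 / (3 * Real.sqrt π) - Ω₀) :=
  ⟨fun _ => le_max_left _ _, integral_rho7 h, fun x _ => rho7_eq_zero_iff h x,
    fun _ hρ => ⟨tfEnergy_rho7_le h hρ, ae_eq_rho7_of_tfEnergy_eq h hρ, tfEnergy_congr_ae⟩,
    tfEnergy_rho7 h⟩
end
end

section
/- Fix Ω₁ > 0 and α > 0, and for ε with 4ε^α < √π Ω₁ let ρ^TF_ε(x) = (Ω₁²/(8ε^{2α})) · max(0, |x|² − R_ε²) with R_ε = √(1 − 4ε^α/(√π Ω₁)). Then for every continuous function F : [0,1] → ℝ, lim_{ε→0} ∫_{B₁} ρ^TF_ε(x) F(|x|) dx = F(1); i.e., ρ^TF_ε converges as a measure to the uniform measure on the unit circle (a radial delta function at r = 1). -/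
open MeasureTheory Real Filter

noncomputable section

/-- Inner radius of the support of the TF minimizer in the rapid-rotation regime. -/
def Reps (Ω₁ α ε : ℝ) : ℝ := Real.sqrt (1 - 4 * ε ^ α / (Real.sqrt π * Ω₁))

/-- The TF minimizer in the rapid-rotation regime. -/
def rhoTFeps (Ω₁ α ε : ℝ) (x : Pt) : ℝ :=
  Ω₁ ^ 2 / (8 * ε ^ (2 * α)) * max 0 (‖x‖ ^ 2 - (Reps Ω₁ α ε) ^ 2)

/-- The TF functional of the rapid-rotation regime. -/
def tfEpsEnergy (Ω₁ α ε : ℝ) (ρ : Pt → ℝ) : ℝ :=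
  ε ^ (2 * α) * ∫ x in B1, ((ρ x) ^ 2 - Ω₁ ^ 2 * ‖x‖ ^ 2 * ρ x / (4 * ε ^ (2 * α)))


/-! Once `4 ε^α ≤ √π Ω₁`, the Thomas–Fermi density is `2 max(0, |x|² - R²) / (π (1 - R²)²)` with
`R = R_ε → 1⁻`. In polar coordinates its radial profile `2πr ρ(r)` is a probability density on
`(0, 1)` vanishing on `(0, R]`, so these profiles are peak functions at `r = 1` and
`∫ ρ F(|x|) → F 1` by the peak-function theorem. -/

open Set Topology

lemma setIntegral_ball_comp_norm (g : ℝ → ℝ) :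
    ∫ x in B1, g ‖x‖ = ∫ r in Ioo (0 : ℝ) 1, 2 * π * r * g r := by
  have hvol : volume.real (Metric.ball (0 : Pt) 1) = π := by
    rw [measureReal_def, EuclideanSpace.volume_ball]
    norm_num [Real.sq_sqrt pi_nonneg, pi_nonneg]
  rw [B1, ← integral_indicator measurableSet_ball]
  have hball : (Metric.ball (0 : Pt) 1).indicator (fun x => g ‖x‖)
      = fun x => (Iio (1 : ℝ)).indicator g ‖x‖ := by
    ext x
    by_cases hx : ‖x‖ < 1 <;> simp [indicator, hx]
  rw [hball, integral_fun_norm_addHaar volume, finrank_euclideanSpace_fin, hvol,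
    ← Ioi_inter_Iio, ← setIntegral_indicator measurableSet_Iio, nsmul_eq_mul, smul_eq_mul,
    ← integral_const_mul, ← integral_const_mul]
  congr 1 with r
  by_cases hr : r < 1
  · simp [hr]
    ring
  · simp [hr]

def annulusDensity (R r : ℝ) : ℝ := 2 / (π * (1 - R ^ 2) ^ 2) * max 0 (r ^ 2 - R ^ 2)

lemma integral_Ioo_mul_max_sq_sub_sq {R : ℝ} (hR0 : 0 ≤ R) (hR1 : R ≤ 1) :
    ∫ r in Ioo (0 : ℝ) 1, r * max 0 (r ^ 2 - R ^ 2) = (1 - R ^ 2) ^ 2 / 4 := by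
  have hcont : Continuous fun r : ℝ => r * max 0 (r ^ 2 - R ^ 2) := by fun_prop
  rw [← integral_Ioc_eq_integral_Ioo, ← intervalIntegral.integral_of_le zero_le_one,
    ← intervalIntegral.integral_add_adjacent_intervals (b := R)
      (hcont.intervalIntegrable _ _) (hcont.intervalIntegrable _ _)]
  have hinner : ∫ r in (0 : ℝ)..R, r * max 0 (r ^ 2 - R ^ 2) = 0 := by
    refine (intervalIntegral.integral_congr (g := fun _ => 0) fun r hr => ?_).trans (by simp)
    rw [uIcc_of_le hR0] at hr
    simp [max_eq_left (by nlinarith [hr.1, hr.2] : r ^ 2 - R ^ 2 ≤ 0)]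
  have houter : ∫ r in R..1, r * max 0 (r ^ 2 - R ^ 2) = ∫ r in R..1, (r ^ 3 - R ^ 2 * r) := by
    refine intervalIntegral.integral_congr fun r hr => ?_
    rw [uIcc_of_le hR1] at hr
    simp only [max_eq_right (by nlinarith [hr.1, hr.2] : 0 ≤ r ^ 2 - R ^ 2)]
    ring
  have hlin : Continuous fun r : ℝ => R ^ 2 * r := by fun_prop
  rw [hinner, houter, intervalIntegral.integral_sub (by simp) (hlin.intervalIntegrable _ _),
    intervalIntegral.integral_const_mul, integral_pow, integral_id]
  ring

lemma integral_Ioo_two_pi_mul_annulusDensity {R : ℝ} (hR0 : 0 ≤ R) (hR1 : R < 1) :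
    ∫ r in Ioo (0 : ℝ) 1, 2 * π * r * annulusDensity R r = 1 := by
  have hR : 0 < 1 - R ^ 2 := by nlinarith
  simp_rw [annulusDensity, show ∀ r : ℝ, 2 * π * r * (2 / (π * (1 - R ^ 2) ^ 2)
      * max 0 (r ^ 2 - R ^ 2)) = 4 / (1 - R ^ 2) ^ 2 * (r * max 0 (r ^ 2 - R ^ 2)) from
    fun r => by field_simp; ring]
  rw [integral_const_mul, integral_Ioo_mul_max_sq_sub_sq hR0 hR1.le]
  field_simp

lemma annulusDensity_eq_zero {R r : ℝ} (hr0 : 0 ≤ r) (hrR : r ≤ R) : annulusDensity R r = 0 := by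
  rw [annulusDensity, max_eq_left (by nlinarith), mul_zero]

theorem tendsto_setIntegral_annulusDensity_mul {F : ℝ → ℝ} (hF : ContinuousOn F (Icc 0 1)) :
    Tendsto (fun R => ∫ x in B1, annulusDensity R ‖x‖ * F ‖x‖) (𝓝[<] 1) (𝓝 (F 1)) := by
  have hpolar : ∀ R, ∫ x in B1, annulusDensity R ‖x‖ * F ‖x‖
      = ∫ r in Ioo (0 : ℝ) 1, (2 * π * r * annulusDensity R r) • F r := fun R =>
    (setIntegral_ball_comp_norm fun r => annulusDensity R r * F r).trans
      (by simp_rw [smul_eq_mul, mul_assoc])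
  simp_rw [hpolar]
  have hR01 : ∀ᶠ R in 𝓝[<] (1 : ℝ), R ∈ Ioo 0 1 := Ioo_mem_nhdsLT zero_lt_one
  refine tendsto_setIntegral_peak_smul_of_integrableOn_of_tendsto measurableSet_Ioo
    measurableSet_Ioo subset_rfl self_mem_nhdsWithin measure_Ioo_lt_top.ne ?_ ?_ ?_ ?_
    ((hF.integrableOn_compact isCompact_Icc).mono_set Ioo_subset_Icc_self)
    ((hF 1 (by simp)).mono Ioo_subset_Icc_self)
  · refine Eventually.of_forall fun R r hr => ?_
    have := hr.1
    exact mul_nonneg (by positivity) (mul_nonneg (by positivity) (le_max_left _ _))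
  · intro u hu h1u
    obtain ⟨ε, hε, hεu⟩ := Metric.isOpen_iff.1 hu 1 h1u
    refine Metric.tendstoUniformlyOn_iff.2 fun η hη => ?_
    filter_upwards [Ioo_mem_nhdsLT (sub_lt_self 1 hε)] with R hR r hr
    have hr1 : ε ≤ |r - 1| := not_lt.1 fun h => hr.2 (hεu (by rwa [Metric.mem_ball, Real.dist_eq]))
    have hrR : r ≤ R := by
      rw [abs_of_neg (by linarith [hr.1.2])] at hr1
      linarith [hR.1]
    simpa [annulusDensity_eq_zero hr.1.1.le hrR] using hη
  · refine tendsto_const_nhds.congr' ?_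
    filter_upwards [hR01] with R hR using (integral_Ioo_two_pi_mul_annulusDensity hR.1.le hR.2).symm
  · exact Eventually.of_forall fun R => by unfold annulusDensity; fun_prop

lemma tendsto_const_mul_rpow_nhdsGT_zero {c α : ℝ} (hc : 0 < c) (hα : 0 < α) :
    Tendsto (fun ε : ℝ => c * ε ^ α) (𝓝[>] 0) (𝓝[>] 0) := by
  refine tendsto_nhdsWithin_iff.2 ⟨?_, ?_⟩
  · have := (continuousAt_rpow_const 0 α (Or.inr hα.le)).tendsto.const_mul c
    simpa [zero_rpow hα.ne'] using this.mono_left nhdsWithin_le_nhds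
  · filter_upwards [self_mem_nhdsWithin] with ε hε using mul_pos hc (rpow_pos_of_pos hε α)

lemma tendsto_Reps_nhdsLT_one {Ω₁ α : ℝ} (hΩ : 0 < Ω₁) (hα : 0 < α) :
    Tendsto (Reps Ω₁ α) (𝓝[>] 0) (𝓝[<] 1) := by
  have hδ := tendsto_const_mul_rpow_nhdsGT_zero (c := 4 / (√π * Ω₁)) (by positivity) hα
  have hsqrt : Tendsto (fun δ : ℝ => √(1 - δ)) (𝓝[>] 0) (𝓝[<] 1) := by
    refine tendsto_nhdsWithin_iff.2 ⟨?_, ?_⟩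
    · simpa using ((by fun_prop : Continuous fun δ : ℝ => √(1 - δ)).tendsto 0).mono_left
        nhdsWithin_le_nhds
    · filter_upwards [self_mem_nhdsWithin] with δ hδ
      exact (sqrt_lt' one_pos).2 (by linarith [mem_Ioi.1 hδ])
  refine (hsqrt.comp hδ).congr fun ε => ?_
  simp [Reps, div_mul_eq_mul_div]

lemma rhoTFeps_eq_annulusDensity {Ω₁ α ε : ℝ} (hΩ : Ω₁ ≠ 0) (hε : 0 < ε)
    (hδ : 4 * ε ^ α / (√π * Ω₁) ≤ 1) (x : Pt) :
    rhoTFeps Ω₁ α ε x = annulusDensity (Reps Ω₁ α ε) ‖x‖ := by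
  have hR : Reps Ω₁ α ε ^ 2 = 1 - 4 * ε ^ α / (√π * Ω₁) := sq_sqrt (by linarith)
  have h2α : ε ^ (2 * α) = (ε ^ α) ^ 2 := by
    rw [mul_comm, rpow_mul hε.le, rpow_two]
  have hε' : 0 < ε ^ α := rpow_pos_of_pos hε α
  rw [rhoTFeps, annulusDensity, hR, sub_sub_cancel, h2α]
  congr 1
  field_simp
  rw [sq_sqrt pi_nonneg]
  ring

lemma eventually_rhoTFeps_eq_annulusDensity {Ω₁ α : ℝ} (hΩ : 0 < Ω₁) (hα : 0 < α) :
    ∀ᶠ ε in 𝓝[>] 0, rhoTFeps Ω₁ α ε = fun x => annulusDensity (Reps Ω₁ α ε) ‖x‖ := by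
  have hδ := (tendsto_const_mul_rpow_nhdsGT_zero (c := 4 / (√π * Ω₁)) (by positivity)
    hα).mono_right nhdsWithin_le_nhds
  filter_upwards [self_mem_nhdsWithin, hδ.eventually (eventually_le_nhds one_pos)] with ε hε hδε
  rw [div_mul_eq_mul_div] at hδε
  exact funext (rhoTFeps_eq_annulusDensity hΩ.ne' hε hδε)

theorem stmt16 (Ω₁ α : ℝ) (hΩ : 0 < Ω₁) (hα : 0 < α)
    (F : ℝ → ℝ) (hF : ContinuousOn F (Set.Icc 0 1)) :
    Tendsto (fun ε => ∫ x in B1, rhoTFeps Ω₁ α ε x * F ‖x‖)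
      (nhdsWithin 0 (Set.Ioi 0)) (nhds (F 1)) := by
  refine ((tendsto_setIntegral_annulusDensity_mul hF).comp
    (tendsto_Reps_nhdsLT_one hΩ hα)).congr' ?_
  filter_upwards [eventually_rhoTFeps_eq_annulusDensity hΩ hα] with ε hε
  simp [hε]
end
end
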